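/- Let M, n, p be positive integers with n + p < M. Let K = (k_{ij}) be an invertible M×M real matrix such that k_{ij} = 0 whenever i − j > p (in particular this holds if K is banded of bandwidth p). Let C' be the submatrix of K⁻¹ consisting of rows n+1,…,M and columns 1,…,n+p. Then rank C' ≤ p. -/

import Mathlib

/-!
Write `B = K⁻¹` and `C'` for the block of `B` in question. The rows `n + p, …, M - 1` of `K`
vanish on the columns `0, …, n - 1`, so their restriction `L` to the columns `n, …, M - 1` still
has linearly independent rows, i.e. rank `M - n - p`. Reading `K * B = 1` in those rows and in
the columns `0, …, n + p - 1` gives `L * C' = 0`, hence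
`rank C' ≤ (M - n) - rank L = p`.
-/

open Function

namespace Matrix

variable {ι m r s t R : Type*}

theorem linearIndependent_row_submatrix_of_eq_zero_off_range [Fintype m] [Ring R]
    {A : Matrix m ι R} (hA : LinearIndependent R A.row) (f : s → ι)
    (hzero : ∀ i j, j ∉ Set.range f → A i j = 0) :
    LinearIndependent R (A.submatrix id f).row := by
  rw [Fintype.linearIndependent_iff] at hA ⊢
  intro c hc
  refine hA c (funext fun j => ?_)
  by_cases hj : j ∈ Set.range f
  · obtain ⟨k, rfl⟩ := hj
    simpa using congrFun hc k
  · simp [hzero _ j hj]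

theorem submatrix_mul_submatrix_eq_zero_of_mul_eq_one [Fintype ι] [Fintype s] [Semiring R]
    [DecidableEq ι] {A B : Matrix ι ι R} (hAB : A * B = 1) (e : r → ι) {f : s → ι}
    (hf : Injective f) (g : t → ι) (hzero : ∀ i j, j ∉ Set.range f → A (e i) j = 0)
    (hdisj : ∀ i k, e i ≠ g k) :
    A.submatrix e f * B.submatrix f g = 0 := by
  ext i k
  calc (A.submatrix e f * B.submatrix f g) i k = (A * B) (e i) (g k) :=
        Fintype.sum_of_injective f hf _ _ (fun j hj => by simp [hzero i j hj]) (fun _ => rfl)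
    _ = 0 := by rw [hAB, one_apply_ne (hdisj i k)]

theorem card_add_rank_submatrix_inv_le [Fintype ι] [DecidableEq ι] [Fintype r] [Fintype s]
    [Fintype t] [Field R] {K : Matrix ι ι R} (hK : IsUnit K) {e : r → ι} (he : Injective e)
    {f : s → ι} (hf : Injective f) (g : t → ι)
    (hzero : ∀ i j, j ∉ Set.range f → K (e i) j = 0)
    (hdisj : ∀ i k, e i ≠ g k) :
    Fintype.card r + (K⁻¹.submatrix f g).rank ≤ Fintype.card s := by
  have hrows : LinearIndependent R (K.submatrix e f).row :=
    linearIndependent_row_submatrix_of_eq_zero_off_range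
      ((linearIndependent_rows_iff_isUnit.mpr hK).comp e he) f hzero
  rw [← hrows.rank_matrix]
  have hKK : K * K⁻¹ = 1 := mul_nonsing_inv K ((isUnit_iff_isUnit_det K).mp hK)
  exact rank_add_rank_le_card_of_mul_eq_zero
    (submatrix_mul_submatrix_eq_zero_of_mul_eq_one hKK e hf g hzero hdisj)

end Matrix

/-- If `K` is an invertible `M × M` real matrix with `K i j = 0` whenever `i - j > p`
(in particular if `K` is banded of bandwidth `p`), then the submatrix of `K⁻¹` formed by
rows `n+1, …, M` and columns `1, …, n+p` has rank at most `p`. -/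
theorem rank_lower_offdiag_block_le (M n p : ℕ) (hM : n + p < M)
    (K : Matrix (Fin M) (Fin M) ℝ) (hK : IsUnit K)
    (hband : ∀ i j : Fin M, (j : ℕ) + p < (i : ℕ) → K i j = 0) :
    (K⁻¹.submatrix
        (fun i : Fin (M - n) => (⟨n + (i : ℕ), by have := i.isLt; omega⟩ : Fin M))
        (fun j : Fin (n + p) => (⟨(j : ℕ), lt_trans j.isLt hM⟩ : Fin M))).rank
      ≤ p := by
  let shift : Fin (M - n) → Fin M := fun i => ⟨n + i, by omega⟩
  let incl : Fin (n + p) → Fin M := fun j => ⟨j, lt_trans j.isLt hM⟩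
  let lowerRows : Fin (M - n - p) → Fin M := fun i => ⟨n + p + i, by omega⟩
  have hshift : Injective shift := fun a b h => Fin.ext (by simpa [shift] using h)
  have hlower : Injective lowerRows := fun a b h => Fin.ext (by simpa [lowerRows] using h)
  have hvanish : ∀ i j, j ∉ Set.range shift → K (lowerRows i) j = 0 := by
    refine fun i j hj => hband _ _ ?_
    by_contra! h
    exact hj ⟨⟨j - n, by omega⟩, Fin.ext (by simp [shift, lowerRows] at h ⊢; omega)⟩
  have hdisj : ∀ i k, lowerRows i ≠ incl k := fun i k h => by
    have := congrArg Fin.val h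
    simp only [lowerRows, incl] at this
    omega
  have key := Matrix.card_add_rank_submatrix_inv_le hK hlower hshift incl hvanish hdisj
  rw [Fintype.card_fin, Fintype.card_fin] at key
  change (K⁻¹.submatrix shift incl).rank ≤ p
  omega
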